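/- If k is even, then for all integers q and r: x_{k,q,r} = x_{k−1,q+1,r+1}. -/

import Mathlib

/-- A quandle as in the paper: a set with operations `▷` and `▷⁻¹` satisfying
axioms A1, A2, A3. -/
class PaperQuandle (Q : Type*) where
  rhd : Q → Q → Q
  rhdInv : Q → Q → Q
  fix : ∀ x : Q, rhd x x = x
  inv_rhd : ∀ x y : Q, rhdInv (rhd x y) y = x
  rhd_inv : ∀ x y : Q, rhd (rhdInv x y) y = x
  self_distrib : ∀ x y z : Q, rhd (rhd x y) z = rhd (rhd x z) (rhd y z)

infixl:65 " ▷ " => PaperQuandle.rhd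
infixl:65 " ▷⁻¹ " => PaperQuandle.rhdInv

/-- The point symmetry at `u`, as a permutation of `Q`: `x ↦ x ▷ u`,
with inverse `x ↦ x ▷⁻¹ u`. -/
def ptSym {Q : Type*} [PaperQuandle Q] (u : Q) : Equiv.Perm Q where
  toFun x := x ▷ u
  invFun x := x ▷⁻¹ u
  left_inv x := PaperQuandle.inv_rhd x u
  right_inv x := PaperQuandle.rhd_inv x u

/-- The element `x_{p,q,r} = a^{(ba)^t c^q d^r}` if `p = 2t`, and
`a^{(ba)^t b c^q d^r}` if `p = 2t+1`.  Here the word `ba` (apply `b`, then `a`)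
is the permutation `ptSym a * ptSym b`. -/
def X {Q : Type*} [PaperQuandle Q] (a b c d : Q) (p q r : ℤ) : Q :=
  if Even p then
    (ptSym d ^ r) ((ptSym c ^ q) (((ptSym a * ptSym b) ^ (p / 2)) a))
  else
    (ptSym d ^ r) ((ptSym c ^ q) ((((ptSym a * ptSym b) ^ ((p - 1) / 2)) a) ▷ b))

/-!
The argument takes place in the group of permutations of `Q` generated by the point symmetries
`A, B, C, D, E, F` of `a, …, f`. The relations `x^{dea} = x` and `x^{bdf} = x` exhibit `D` as
the products `EA` and `FB` of involutions, so both `A` and `B` invert `D` and `D` commutes with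
`AB`. For `k = 2t` the relation `x^{c(ab)^k ae} = x` then reads `DC = (AB)^{2t}`, so `C` commutes
with `D`, and the dihedral identity `(AB)^{2t} B (AB)^{t-1} = (AB)^t A` turns the word defining
`x_{k-1,q+1,r+1}` into `D^r C^q (AB)^t A`, which takes `a` to `x_{k,q,r}` because `a ▷ a = a`.
-/

section Involutions

variable {G : Type*} [Group G] {A B : G}

theorem semiconjBy_mul_inv_of_mul_self_eq_one (hA : A * A = 1) (hB : B * B = 1) :
    SemiconjBy B (A * B) (A * B)⁻¹ := by
  rw [SemiconjBy, mul_inv_rev, inv_eq_of_mul_eq_one_right hA, inv_eq_of_mul_eq_one_right hB,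
    mul_assoc]

theorem mul_zpow_eq_zpow_neg_mul (hA : A * A = 1) (hB : B * B = 1) (j : ℤ) :
    B * (A * B) ^ j = (A * B) ^ (-j) * B := by
  rw [zpow_neg, ← inv_zpow]
  exact ((semiconjBy_mul_inv_of_mul_self_eq_one hA hB).zpow_right j).eq

theorem zpow_add_self_mul_mul_zpow_sub_one (hA : A * A = 1) (hB : B * B = 1) (t : ℤ) :
    (A * B) ^ (t + t) * B * (A * B) ^ (t - 1) = (A * B) ^ t * A := by
  rw [mul_assoc, mul_zpow_eq_zpow_neg_mul hA hB, ← mul_assoc, ← zpow_add,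
    show t + t + -(t - 1) = t + 1 by ring, zpow_add_one, mul_assoc, mul_assoc, hB, mul_one]

theorem commute_mul_of_semiconjBy_inv {D : G} (hA : SemiconjBy A D D⁻¹)
    (hB : SemiconjBy B D D⁻¹) : Commute (A * B) D := by
  have h : SemiconjBy (A * B) D D⁻¹⁻¹ := hA.inv_right.mul_left hB
  rwa [inv_inv] at h

theorem zpow_succ_mul_zpow_succ_mul_mul_zpow_pred {C D E F : G} {t : ℤ}
    (hA : A * A = 1) (hB : B * B = 1) (hE : E * E = 1) (hF : F * F = 1)
    (hAED : A * E * D = 1) (hFDB : F * D * B = 1) (hC : E * A * (B * A) ^ (t + t) * C = 1)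
    (q r : ℤ) :
    D ^ (r + 1) * C ^ (q + 1) * B * (A * B) ^ (t - 1) = D ^ r * C ^ q * (A * B) ^ t * A := by
  have hD_EA : D = E * A := by
    rw [eq_inv_of_mul_eq_one_right hAED, mul_inv_rev, inv_eq_of_mul_eq_one_right hA,
      inv_eq_of_mul_eq_one_right hE]
  have hD_FB : D = F * B := by
    rw [eq_inv_mul_of_mul_eq (eq_inv_of_mul_eq_one_left hFDB), inv_eq_of_mul_eq_one_right hF,
      inv_eq_of_mul_eq_one_right hB]
  have hDM : Commute D (A * B) := .symm <| commute_mul_of_semiconjBy_inv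
    (hD_EA ▸ semiconjBy_mul_inv_of_mul_self_eq_one hE hA)
    (hD_FB ▸ semiconjBy_mul_inv_of_mul_self_eq_one hF hB)
  have hDC : D * C = (A * B) ^ (t + t) := by
    have hBA : B * A = (A * B)⁻¹ := by
      rw [mul_inv_rev, inv_eq_of_mul_eq_one_right hA, inv_eq_of_mul_eq_one_right hB]
    rw [← hD_EA, hBA, inv_zpow, ((hDM.zpow_right (t + t)).inv_right).eq, mul_assoc] at hC
    rw [eq_inv_of_mul_eq_one_right hC, inv_inv]
  have hCD : Commute D C := by
    rw [eq_inv_mul_of_mul_eq hDC]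
    exact (Commute.refl D).inv_right.mul_right (hDM.zpow_right _)
  calc D ^ (r + 1) * C ^ (q + 1) * B * (A * B) ^ (t - 1)
      = D ^ r * (D * C ^ q) * C * B * (A * B) ^ (t - 1) := by group
    _ = D ^ r * C ^ q * (D * C * B * (A * B) ^ (t - 1)) := by
      rw [(hCD.zpow_right q).eq]; simp only [mul_assoc]
    _ = D ^ r * C ^ q * (A * B) ^ t * A := by
      rw [hDC, zpow_add_self_mul_mul_zpow_sub_one hA hB]; simp only [mul_assoc]

end Involutions

section PointSymmetries

variable {Q : Type*} [PaperQuandle Q] (a b c d : Q) (t q r : ℤ)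

theorem X_add_self :
    X a b c d (t + t) q r = (ptSym d ^ r * ptSym c ^ q * (ptSym a * ptSym b) ^ t) a := by
  rw [X, if_pos ⟨t, rfl⟩, show (t + t) / 2 = t by omega]
  rfl

theorem X_add_self_add_one :
    X a b c d (t + t + 1) q r
      = (ptSym d ^ r * ptSym c ^ q * ptSym b * (ptSym a * ptSym b) ^ t) a := by
  rw [X, if_neg (by simp), show (t + t + 1 - 1) / 2 = t by omega]
  rfl

end PointSymmetries

theorem stmt_10
    {Q : Type*} [PaperQuandle Q] (k : ℤ) (a b c d e f : Q)
    (rel_a : ∀ x : Q, x ▷ a ▷ a = x)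
    (rel_b : ∀ x : Q, x ▷ b ▷ b = x)
    (rel_e : ∀ x : Q, x ▷ e ▷ e = x)
    (rel_f : ∀ x : Q, x ▷ f ▷ f = x)
    (rel_dea : ∀ x : Q, x ▷ d ▷ e ▷ a = x)
    (rel_bdf : ∀ x : Q, x ▷ b ▷ d ▷ f = x)
    (rel_cke : ∀ x : Q, (((ptSym b * ptSym a) ^ k) (x ▷ c)) ▷ a ▷ e = x)
    (hke : Even k) :
    ∀ q r : ℤ, X a b c d k q r = X a b c d (k - 1) (q + 1) (r + 1) := by
  intro q r
  obtain ⟨t, rfl⟩ := hke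
  have hdea : ptSym a * ptSym e * ptSym d = 1 := Equiv.ext rel_dea
  have hbdf : ptSym f * ptSym d * ptSym b = 1 := Equiv.ext rel_bdf
  have hcke : ptSym e * ptSym a * (ptSym b * ptSym a) ^ (t + t) * ptSym c = 1 :=
    Equiv.ext rel_cke
  have hword := zpow_succ_mul_zpow_succ_mul_mul_zpow_pred (Equiv.ext rel_a) (Equiv.ext rel_b)
    (Equiv.ext rel_e) (Equiv.ext rel_f) hdea hbdf hcke q r
  rw [show t + t - 1 = t - 1 + (t - 1) + 1 by ring, X_add_self, X_add_self_add_one, hword,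
    Equiv.Perm.mul_apply _ (ptSym a)]
  exact congrArg _ (PaperQuandle.fix a).symm
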